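/- arXiv:1509.06668 — 5 statements merged into one kernel-verified Lean document; each statement's English description precedes it below -/
import Mathlib

section
/- Let (Ω, 𝒜, μ) be a probability space, let g, g̃ : Ω → ℝ be measurable, and let γ ≥ 0. Then the hybrid failure-probability estimate P_f^h = P_γ + Q_γ satisfies the exact error identity P_f^h − P_f = μ({g̃ < −γ} ∩ {g ≥ 0}) − μ({g < 0} ∩ {g̃ > γ}). -/
/-!
Split the failure event `{g < 0}` according to whether `g̃ < -γ`, `|g̃| ≤ γ` or `γ < g̃`
(a partition because `γ ≥ 0`), and split `{g̃ < -γ}` according to the sign of `g`.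
The common piece `{g̃ < -γ} ∩ {g < 0}` cancels, and what remains is the identity.
-/

open MeasureTheory

section

variable {Ω : Type*} [MeasurableSpace Ω] {μ : Measure Ω} [IsFiniteMeasure μ] {f : Ω → ℝ}

theorem measureReal_eq_lt_neg_add_abs_le_add_lt (hf : Measurable f) {γ : ℝ} (hγ : 0 ≤ γ)
    (s : Set Ω) :
    μ.real s = μ.real ({ω | f ω < -γ} ∩ s) + μ.real ({ω | |f ω| ≤ γ} ∩ s)
      + μ.real ({ω | γ < f ω} ∩ s) := by
  have below := measureReal_inter_add_sdiff (μ := μ) (s := s) (t := {ω | f ω < -γ})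
    (hf measurableSet_Iio)
  have above := measureReal_inter_add_sdiff (μ := μ) (s := s \ {ω | f ω < -γ})
    (t := {ω | γ < f ω}) (hf measurableSet_Ioi)
  have h_above : (s \ {ω | f ω < -γ}) ∩ {ω | γ < f ω} = {ω | γ < f ω} ∩ s := by
    ext ω
    simp only [Set.mem_inter_iff, Set.mem_sdiff, Set.mem_ofPred_eq, not_lt]
    constructor
    · rintro ⟨⟨hs, _⟩, hlt⟩
      exact ⟨hlt, hs⟩
    · rintro ⟨hlt, hs⟩
      exact ⟨⟨hs, by linarith⟩, hlt⟩
  have h_middle : (s \ {ω | f ω < -γ}) \ {ω | γ < f ω} = {ω | |f ω| ≤ γ} ∩ s := by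
    ext ω
    simp only [Set.mem_inter_iff, Set.mem_sdiff, Set.mem_ofPred_eq, not_lt, abs_le]
    tauto
  rw [h_above, h_middle] at above
  rw [Set.inter_comm] at below
  linarith

end

/-- exact error identity for the hybrid failure-probability estimate
`P_f^h = P_γ + Q_γ`:
`P_f^h − P_f = μ({g̃ < −γ} ∩ {g ≥ 0}) − μ({g < 0} ∩ {g̃ > γ})`. -/
theorem hybrid_error_identity
    {Ω : Type*} [MeasurableSpace Ω] (μ : Measure Ω) [IsProbabilityMeasure μ]
    (g gt : Ω → ℝ) (hg : Measurable g) (hgt : Measurable gt)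
    (γ : ℝ) (hγ : 0 ≤ γ) :
    ((μ {ω | gt ω < -γ}).toReal + (μ {ω | |gt ω| ≤ γ ∧ g ω < 0}).toReal)
      - (μ {ω | g ω < 0}).toReal
    = (μ ({ω | gt ω < -γ} ∩ {ω | 0 ≤ g ω})).toReal
      - (μ ({ω | g ω < 0} ∩ {ω | γ < gt ω})).toReal := by
  have split_surrogate_failure :=
    measureReal_inter_add_sdiff (μ := μ) (s := {ω | gt ω < -γ})
      (t := {ω | g ω < 0}) (hg measurableSet_Iio)
  have split_failure := measureReal_eq_lt_neg_add_abs_le_add_lt (μ := μ) hgt hγ {ω | g ω < 0}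
  have h_safe : {ω | gt ω < -γ} \ {ω | g ω < 0} = {ω | gt ω < -γ} ∩ {ω | 0 ≤ g ω} := by
    ext ω
    simp [not_lt]
  rw [h_safe] at split_surrogate_failure
  simp only [← measureReal_def, Set.ofPred_and]
  rw [Set.inter_comm {ω | g ω < 0}]
  linarith
end

section
/- Let (Ω, 𝒜, μ) be a probability space, let g, g̃ : Ω → ℝ be measurable, and let γ ≥ 0. Then the hybrid estimate P_f^h = P_γ + Q_γ satisfies |P_f^h − P_f| ≤ μ({ω : |g(ω) − g̃(ω)| > γ}). -/
/-!
`P_γ + Q_γ` is the probability of the disjoint union `{g̃ < -γ} ∪ {|g̃| ≤ γ, g < 0}`. Where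
`|g - g̃| ≤ γ`, `g̃ < -γ` forces `g < 0` and `g < 0` forces `g̃ ≤ γ`, so there this event coincides
with `{g < 0}`; the measures of two events that agree off a set `E` differ by at most `μ E`.
-/

open MeasureTheory

theorem abs_measureReal_sub_le_of_subset_union {Ω : Type*} [MeasurableSpace Ω] {μ : Measure Ω}
    [IsFiniteMeasure μ] {s t e : Set Ω} (hst : s ⊆ t ∪ e) (hts : t ⊆ s ∪ e) :
    |μ.real s - μ.real t| ≤ μ.real e :=
  abs_sub_le_iff.2
    ⟨by linarith [measureReal_mono (μ := μ) hst, measureReal_union_le (μ := μ) t e],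
     by linarith [measureReal_mono (μ := μ) hts, measureReal_union_le (μ := μ) s e]⟩

section Hybrid

variable {Ω : Type*} (g gt : Ω → ℝ) (γ : ℝ)

def hybridFailureSet : Set Ω :=
  {ω | gt ω < -γ} ∪ {ω | |gt ω| ≤ γ ∧ g ω < 0}

theorem measureReal_hybridFailureSet [MeasurableSpace Ω] (μ : Measure Ω) [IsFiniteMeasure μ]
    (hgt : Measurable gt) :
    μ.real (hybridFailureSet g gt γ) =
      μ.real {ω | gt ω < -γ} + μ.real {ω | |gt ω| ≤ γ ∧ g ω < 0} := by
  refine measureReal_union' (Set.disjoint_left.2 ?_) (measurableSet_lt hgt measurable_const)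
  rintro ω hω ⟨hband, -⟩
  exact absurd (neg_le_of_abs_le hband) (not_le.2 hω)

theorem hybridFailureSet_subset :
    hybridFailureSet g gt γ ⊆ {ω | g ω < 0} ∪ {ω | γ < |g ω - gt ω|} := by
  rintro ω ((hω : gt ω < -γ) | ⟨-, hω⟩)
  · by_cases hg : g ω < 0
    · exact Or.inl hg
    · exact Or.inr (show γ < |g ω - gt ω| from lt_abs.2 (Or.inl (by linarith [not_lt.1 hg])))
  · exact Or.inl hω

theorem failureSet_subset_hybridFailureSet :
    {ω | g ω < 0} ⊆ hybridFailureSet g gt γ ∪ {ω | γ < |g ω - gt ω|} := by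
  intro ω (hω : g ω < 0)
  by_cases hlow : gt ω < -γ
  · exact Or.inl (Or.inl hlow)
  by_cases hhigh : gt ω ≤ γ
  · exact Or.inl (Or.inr ⟨abs_le.2 ⟨not_lt.1 hlow, hhigh⟩, hω⟩)
  · exact Or.inr (show γ < |g ω - gt ω| from lt_abs.2 (Or.inr (by linarith [not_le.1 hhigh])))

end Hybrid

theorem hybrid_error_bound_general
    {Ω : Type*} [MeasurableSpace Ω] (μ : Measure Ω) [IsProbabilityMeasure μ]
    (g gt : Ω → ℝ) (hgt : Measurable gt)
    (γ : ℝ) :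
    |((μ {ω | gt ω < -γ}).toReal + (μ {ω | |gt ω| ≤ γ ∧ g ω < 0}).toReal)
        - (μ {ω | g ω < 0}).toReal|
      ≤ (μ {ω | γ < |g ω - gt ω|}).toReal := by
  simp only [← measureReal_def, ← measureReal_hybridFailureSet g gt γ μ hgt]
  exact abs_measureReal_sub_le_of_subset_union (hybridFailureSet_subset g gt γ)
    (failureSet_subset_hybridFailureSet g gt γ)

/-- the hybrid estimate `P_f^h = P_γ + Q_γ` satisfies
`|P_f^h − P_f| ≤ μ({ω : |g(ω) − g̃(ω)| > γ})`. -/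
theorem hybrid_error_bound
    {Ω : Type*} [MeasurableSpace Ω] (μ : Measure Ω) [IsProbabilityMeasure μ]
    (g gt : Ω → ℝ) (hg : Measurable g) (hgt : Measurable gt)
    (γ : ℝ) (hγ : 0 ≤ γ) :
    |((μ {ω | gt ω < -γ}).toReal + (μ {ω | |gt ω| ≤ γ ∧ g ω < 0}).toReal)
        - (μ {ω | g ω < 0}).toReal|
      ≤ (μ {ω | γ < |g ω - gt ω|}).toReal :=
  hybrid_error_bound_general μ g gt hgt γ
end

section
/- Let (Ω, 𝒜, μ) be a probability space, let g, g̃ : Ω → ℝ be measurable with g − g̃ in L^p(μ) for some real p ≥ 1, and set ε_p = (∫ |g − g̃|^p dμ)^{1/p}. Let ε > 0 and let γ > 0 satisfy γ ≥ ε_p / ε^{1/p}. Then the hybrid estimate satisfies |P_f^h − P_f| ≤ ε. -/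
open MeasureTheory
open scoped symmDiff

/-!
Off the event `{γ ≤ |g − g̃|}` the surrogate is within `γ` of `g`, so there `g̃ < −γ` forces
`g < 0` and `g̃ > γ` forces `g > 0`: the hybrid event `{g̃ < −γ} ∪ {|g̃| ≤ γ, g < 0}` and the
failure event `{g < 0}` coincide. Hence `|P_f^h − P_f| ≤ μ(γ ≤ |g − g̃|)`, and Markov's inequality
for `|g − g̃|^p` bounds this by `ε_p^p / γ^p ≤ ε`.
-/

theorem abs_measureReal_sub_le_of_symmDiff_subset {α : Type*} [MeasurableSpace α]
    {μ : Measure α} [IsFiniteMeasure μ] {s t u : Set α} (h : s ∆ t ⊆ u) :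
    |μ.real s - μ.real t| ≤ μ.real u :=
  abs_sub_le_iff.2
    ⟨le_trans le_measureReal_sdiff (measureReal_mono (subset_trans le_sup_left h)),
      le_trans le_measureReal_sdiff (measureReal_mono (subset_trans le_sup_right h))⟩

theorem measureReal_abs_ge_le_integral_rpow_div {α : Type*} [MeasurableSpace α]
    {μ : Measure α} {f : α → ℝ} {p γ : ℝ} (hp : 0 < p) (hγ : 0 < γ)
    (hf : Integrable (fun x => |f x| ^ p) μ) :
    μ.real {x | γ ≤ |f x|} ≤ (∫ x, |f x| ^ p ∂μ) / γ ^ p := by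
  have hset : {x | γ ≤ |f x|} = {x | γ ^ p ≤ |f x| ^ p} := by
    ext x
    exact (Real.rpow_le_rpow_iff hγ.le (abs_nonneg _) hp).symm
  rw [le_div_iff₀ (by positivity), mul_comm, hset]
  exact mul_meas_ge_le_integral_of_nonneg
    (Filter.Eventually.of_forall fun x => by positivity) hf _

theorem hybrid_event_iff_of_abs_sub_lt {a b γ : ℝ} (h : |a - b| < γ) :
    b < -γ ∨ (|b| ≤ γ ∧ a < 0) ↔ a < 0 := by
  rw [abs_lt] at h
  rw [abs_le]
  constructor
  · rintro (hb | ⟨-, ha⟩) <;> linarith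
  · intro ha
    by_cases hb : b < -γ
    · exact Or.inl hb
    · exact Or.inr ⟨⟨by linarith, by linarith⟩, ha⟩

theorem hybrid_symmDiff_failure_subset {Ω : Type*} (g gt : Ω → ℝ) (γ : ℝ) :
    ({ω | gt ω < -γ} ∪ {ω | |gt ω| ≤ γ ∧ g ω < 0}) ∆ {ω | g ω < 0} ⊆
      {ω | γ ≤ |g ω - gt ω|} := by
  intro ω hω
  by_contra hclose
  rw [Set.mem_symmDiff] at hω
  have key := hybrid_event_iff_of_abs_sub_lt (not_le.1 hclose)
  simp only [Set.mem_union, Set.mem_ofPred_eq] at hω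
  tauto

theorem hybrid_error_bound_Lp_general
    {Ω : Type*} [MeasurableSpace Ω] (μ : Measure Ω) [IsProbabilityMeasure μ]
    (g gt : Ω → ℝ) (hgt : Measurable gt)
    (p : ℝ) (hp : 1 ≤ p)
    (hLp : Integrable (fun ω => |g ω - gt ω| ^ p) μ)
    (ε : ℝ) (hε : 0 < ε)
    (γ : ℝ) (hγpos : 0 < γ)
    (hγ : (∫ ω, |g ω - gt ω| ^ p ∂μ) ^ (1 / p) / ε ^ (1 / p) ≤ γ) :
    |((μ {ω | gt ω < -γ}).toReal + (μ {ω | |gt ω| ≤ γ ∧ g ω < 0}).toReal)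
        - (μ {ω | g ω < 0}).toReal| ≤ ε := by
  have hp0 : 0 < p := one_pos.trans_le hp
  have hmoment : (∫ ω, |g ω - gt ω| ^ p ∂μ) / γ ^ p ≤ ε := by
    have hI : 0 ≤ ∫ ω, |g ω - gt ω| ^ p ∂μ := integral_nonneg fun ω => by positivity
    rw [← Real.div_rpow hI hε.le, one_div,
      Real.rpow_inv_le_iff_of_pos (by positivity) hγpos.le hp0, div_le_iff₀ hε] at hγ
    rwa [div_le_iff₀ (by positivity), mul_comm]
  have hdisj : Disjoint {ω | gt ω < -γ} {ω | |gt ω| ≤ γ ∧ g ω < 0} :=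
    Set.disjoint_left.2 fun ω h1 h2 => by
      linarith [(abs_le.1 h2.1).1, show gt ω < -γ from h1]
  change |(μ.real _ + μ.real _) - μ.real _| ≤ ε
  rw [← measureReal_union' hdisj (hgt measurableSet_Iio)]
  calc _ ≤ μ.real {ω | γ ≤ |g ω - gt ω|} :=
        abs_measureReal_sub_le_of_symmDiff_subset (hybrid_symmDiff_failure_subset g gt γ)
    _ ≤ _ := measureReal_abs_ge_le_integral_rpow_div hp0 hγpos hLp
    _ ≤ ε := hmoment

/-- if `g − g̃ ∈ L^p(μ)` with `ε_p = (∫ |g − g̃|^p dμ)^{1/p}`,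
`ε > 0` and `γ > 0` satisfies `γ ≥ ε_p / ε^{1/p}`, then the hybrid estimate
satisfies `|P_f^h − P_f| ≤ ε`. -/
theorem hybrid_error_bound_Lp
    {Ω : Type*} [MeasurableSpace Ω] (μ : Measure Ω) [IsProbabilityMeasure μ]
    (g gt : Ω → ℝ) (hg : Measurable g) (hgt : Measurable gt)
    (p : ℝ) (hp : 1 ≤ p)
    (hLp : Integrable (fun ω => |g ω - gt ω| ^ p) μ)
    (ε : ℝ) (hε : 0 < ε)
    (γ : ℝ) (hγpos : 0 < γ)
    (hγ : (∫ ω, |g ω - gt ω| ^ p ∂μ) ^ (1 / p) / ε ^ (1 / p) ≤ γ) :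
    |((μ {ω | gt ω < -γ}).toReal + (μ {ω | |gt ω| ≤ γ ∧ g ω < 0}).toReal)
        - (μ {ω | g ω < 0}).toReal| ≤ ε :=
  hybrid_error_bound_Lp_general μ g gt hgt p hp hLp ε hε γ hγpos hγ
end

section
/- Let (Ω, 𝒜, μ) be a probability space, let g, g̃ : Ω → ℝ be measurable, and let γ ≥ 0 be such that |g(ω) − g̃(ω)| ≤ γ for μ-almost every ω. Then the hybrid estimate is exact: P_γ + Q_γ = P_f. -/
/-!
Wherever `|g - g̃| ≤ γ`, the sign of `g` is forced outside the band `|g̃| ≤ γ`: `g̃ < -γ` gives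
`g < 0` and `g̃ > γ` gives `g > 0`. So `{g < 0}` is, up to a null set, the disjoint union of
`{g̃ < -γ}` and `{|g̃| ≤ γ, g < 0}`.
-/

open MeasureTheory

lemma lt_neg_or_abs_le_and_neg_iff {x y γ : ℝ} (h : |x - y| ≤ γ) :
    y < -γ ∨ (|y| ≤ γ ∧ x < 0) ↔ x < 0 := by
  obtain ⟨hlow, hup⟩ := abs_le.mp h
  constructor
  · rintro (hy | ⟨-, hx⟩)
    · linarith
    · exact hx
  · intro hx
    by_cases hy : y < -γ
    · exact Or.inl hy
    · exact Or.inr ⟨abs_le.mpr ⟨not_lt.mp hy, by linarith⟩, hx⟩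

lemma disjoint_lt_neg_abs_le {Ω : Type*} (f g : Ω → ℝ) (γ : ℝ) :
    Disjoint {ω | f ω < -γ} {ω | |f ω| ≤ γ ∧ g ω < 0} :=
  Set.disjoint_left.mpr fun _ hlt ⟨habs, _⟩ => (abs_le.mp habs).1.not_gt hlt

theorem hybrid_exact_of_ae_close_general
    {Ω : Type*} [MeasurableSpace Ω] (μ : Measure Ω)
    (g gt : Ω → ℝ) (hgt : Measurable gt)
    (γ : ℝ)
    (hclose : ∀ᵐ ω ∂μ, |g ω - gt ω| ≤ γ) :
    μ {ω | gt ω < -γ} + μ {ω | |gt ω| ≤ γ ∧ g ω < 0} = μ {ω | g ω < 0} := by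
  rw [← measure_union' (disjoint_lt_neg_abs_le gt g γ) (hgt measurableSet_Iio)]
  refine measure_congr ?_
  filter_upwards [hclose] with ω hω
  exact propext (lt_neg_or_abs_le_and_neg_iff hω)

/-- if `|g − g̃| ≤ γ` μ-almost everywhere, then the hybrid
estimate is exact: `P_γ + Q_γ = P_f`. -/
theorem hybrid_exact_of_ae_close
    {Ω : Type*} [MeasurableSpace Ω] (μ : Measure Ω) [IsProbabilityMeasure μ]
    (g gt : Ω → ℝ) (hg : Measurable g) (hgt : Measurable gt)
    (γ : ℝ) (hγ : 0 ≤ γ)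
    (hclose : ∀ᵐ ω ∂μ, |g ω - gt ω| ≤ γ) :
    μ {ω | gt ω < -γ} + μ {ω | |gt ω| ≤ γ ∧ g ω < 0} = μ {ω | g ω < 0} :=
  hybrid_exact_of_ae_close_general μ g gt hgt γ hclose
end

section
/- For every natural number n, the Legendre polynomial of odd degree 2n+1, defined by Rodrigues' formula P_{2n+1} = (1/(2^{2n+1} (2n+1)!)) · D^{2n+1}((X² − 1)^{2n+1}), satisfies ∫₀¹ P_{2n+1}(x) dx = (−1)^n (2n)! / (2^{2n+1} · n! · (n+1)!). -/
/-!
Up to the factor `1 / (2^{m+1} (m+1)!)`, `P_{m+1}` is the derivative of `q = D^m (X² - 1)^{m+1}`,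
so its integral over `[0, 1]` is a multiple of `q(1) - q(0)`. Fewer than `m + 1` derivatives of
`(X² - 1)^{m+1}` leave a factor `X² - 1`, so `q(1) = 0`, while `q(0)` is `m!` times the coefficient
of `X^m` in `(X² - 1)^{m+1}`, read off from the binomial theorem: for `m = 2n` it is
`(2n)! (-1)^{n+1} C(2n+1, n)`.
-/

open Polynomial intervalIntegral

/-- The Legendre polynomial `P_m` defined by Rodrigues' formula. -/
noncomputable def legendre (m : ℕ) : Polynomial ℝ :=
  Polynomial.C ((1 : ℝ) / (2 ^ m * (Nat.factorial m))) *
    Polynomial.derivative^[m] ((Polynomial.X ^ 2 - 1) ^ m)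

open Nat

namespace Polynomial

theorem integral_eval_derivative (q : ℝ[X]) (a b : ℝ) :
    ∫ x in a..b, (derivative q).eval x = q.eval b - q.eval a :=
  integral_eq_sub_of_hasDerivAt (fun x _ => q.hasDerivAt x)
    ((derivative q).continuous.intervalIntegrable a b)

theorem IsRoot.iterate_derivative_pow {R : Type*} [CommRing R] {p : R[X]} {a : R}
    (h : p.IsRoot a) {k m : ℕ} (hkm : k < m) : (derivative^[k] (p ^ m)).IsRoot a := by
  obtain ⟨r, hr⟩ := pow_sub_dvd_iterate_derivative_pow p m k
  rw [IsRoot, hr, eval_mul, eval_pow, h.eq_zero, zero_pow (by omega), zero_mul]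

theorem eval_zero_iterate_derivative {R : Type*} [Semiring R] (p : R[X]) (k : ℕ) :
    (derivative^[k] p).eval 0 = k ! * p.coeff k := by
  rw [← coeff_zero_eq_eval_zero, coeff_iterate_derivative, zero_add, descFactorial_self,
    nsmul_eq_mul]

theorem coeff_X_sq_sub_one_pow_two_mul {R : Type*} [CommRing R] (m k : ℕ) :
    ((X ^ 2 - 1 : R[X]) ^ m).coeff (2 * k) = (-1) ^ (m - k) * m.choose k := by
  have hexpand : (X ^ 2 - 1 : R[X]) ^ m = expand R 2 ((X + C (-1)) ^ m) := by
    simp [sub_eq_add_neg]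
  rw [hexpand, coeff_expand_mul' two_pos, coeff_X_add_C_pow]

end Polynomial

theorem integral_zero_one_legendre_succ (m : ℕ) :
    ∫ x in (0 : ℝ)..1, (legendre (m + 1)).eval x
      = -(derivative^[m] ((X ^ 2 - 1 : ℝ[X]) ^ (m + 1))).eval 0 / (2 ^ (m + 1) * (m + 1)!) := by
  have hroot : (derivative^[m] ((X ^ 2 - 1 : ℝ[X]) ^ (m + 1))).IsRoot 1 :=
    IsRoot.iterate_derivative_pow (by simp) m.lt_succ_self
  simp only [legendre, eval_mul, eval_C, Function.iterate_succ_apply']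
  rw [integral_const_mul, integral_eval_derivative, hroot.eq_zero]
  ring

/-- `∫₀¹ P_{2n+1}(x) dx = (−1)^n (2n)! / (2^{2n+1} n! (n+1)!)`. -/
theorem integral_legendre_odd (n : ℕ) :
    ∫ x in (0 : ℝ)..1, (legendre (2 * n + 1)).eval x
      = (-1 : ℝ) ^ n * (Nat.factorial (2 * n))
          / (2 ^ (2 * n + 1) * (Nat.factorial n) * (Nat.factorial (n + 1))) := by
  have heval : (derivative^[2 * n] ((X ^ 2 - 1 : ℝ[X]) ^ (2 * n + 1))).eval 0
      = (2 * n)! * ((-1) ^ (n + 1) * (2 * n + 1).choose n) := by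
    rw [eval_zero_iterate_derivative, coeff_X_sq_sub_one_pow_two_mul,
      show 2 * n + 1 - n = n + 1 by omega]
  have hchoose : ((2 * n + 1).choose n : ℝ) * n ! * (n + 1)! = (2 * n + 1)! := by
    have := choose_mul_factorial_mul_factorial (show n ≤ 2 * n + 1 by omega)
    rw [show 2 * n + 1 - n = n + 1 by omega] at this
    exact_mod_cast this
  have hchoose_ne_zero : ((2 * n + 1).choose n : ℝ) ≠ 0 := by
    exact_mod_cast (choose_pos (show n ≤ 2 * n + 1 by omega)).ne'
  rw [integral_zero_one_legendre_succ, heval, ← hchoose]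
  field_simp
  ring
end
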